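/- Assume (A1) and let λ be real and close to λ₀. In both cases A(α) = A(β) and A(α) = −A(β), the connection coefficients satisfy c₂·c̃₃ = 1 + O(h) as h → 0. -/

import Mathlib

/-!
STATEMENT 6 (Lemma 3.1, first part).

Assume (A1), let `λ` be real and close to `λ₀`, and let `α < β` be the turning points
(zeros of `A² - λ²`). With exact WKB solutions `u₁ = u⁺(·;α,x₁)`, `u₂ = u⁺(·;α,x₂)`,
`ũ₂ = u⁺(·;β,x₂)`, `u₃ = u⁻(·;α,x₃)`, `ũ₃ = u⁻(·;β,x₃)`, `u₄ = u⁻(·;β,x₄)` — the base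
points `x₁,…,x₄` lying one in each of the four sectors cut out by the Stokes lines,
encoded here by the existence of paths from `x₁` to `x₃`, `x₂` to `x₃` and `x₂` to `x₄`
along which `Re z` is strictly increasing — the connection coefficients defined by
`u₁ = c₂ u₂ + c₃ u₃`, `u₄ = c̃₂ ũ₂ + c̃₃ ũ₃` satisfy `c₂ c̃₃ = 1 + O(h)` as `h → 0`,
in both cases `A(α) = ±A(β)`.
-/

open Complex Set

noncomputable section

/-- Assumption (A1). -/
structure ZSA1 (A : ℂ → ℂ) (δ lam0 α0 β0 : ℝ) : Prop where
  delta_pos : 0 < δ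
  analytic : AnalyticOnNhd ℂ A {z : ℂ | |z.im| < δ}
  real_on_real : ∀ x : ℝ, (A x).im = 0
  lam0_pos : 0 < lam0
  tp_lt : α0 < β0
  crossing : ∀ x : ℝ, |(A x).re| = lam0 ↔ (x = α0 ∨ x = β0)
  nondeg : deriv A (α0 : ℂ) * deriv A (β0 : ℂ) ≠ 0
  inside : ∀ x : ℝ, α0 < x → x < β0 → |(A x).re| < lam0
  outside : ∀ x : ℝ, (x < α0 ∨ β0 < x) → lam0 < |(A x).re|
  liminf_large : lam0 < Filter.liminf (fun x : ℝ => |(A x).re|) (Filter.cocompact ℝ)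

/-- `(we, wo)` is the pair of summed exact WKB series with sign `s = ±1` and base
point `x₀`. -/
def IsWKBSum (Ω : Set ℂ) (h : ℝ) (s : ℂ) (sq H : ℂ → ℂ) (x₀ : ℂ) (we wo : ℂ → ℂ) : Prop :=
  we x₀ = 1 ∧ wo x₀ = 0 ∧ ∀ x ∈ Ω,
    HasDerivAt we (deriv H x / H x * wo x) x ∧
    HasDerivAt wo (deriv H x / H x * we x - s * (2 * sq x / (h : ℂ)) * wo x) x

/-- The exact WKB solution `u⁺`, componentwise. -/
def wkbPlus (h : ℝ) (Z H we wo : ℂ → ℂ) (x : ℂ) : ℂ × ℂ :=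
  (Complex.exp (Z x / (h : ℂ)) *
      ((H x)⁻¹ * (wo x + we x) + Complex.I * H x * (wo x - we x)),
   Complex.exp (Z x / (h : ℂ)) *
      (-Complex.I * (H x)⁻¹ * (wo x + we x) - H x * (wo x - we x)))

/-- The exact WKB solution `u⁻`, componentwise. -/
def wkbMinus (h : ℝ) (Z H we wo : ℂ → ℂ) (x : ℂ) : ℂ × ℂ :=
  (Complex.exp (-Z x / (h : ℂ)) *
      ((H x)⁻¹ * (we x + wo x) + Complex.I * H x * (we x - wo x)),
   Complex.exp (-Z x / (h : ℂ)) *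
      (-Complex.I * (H x)⁻¹ * (we x + wo x) - H x * (we x - wo x)))

/-- There is a path from `a` to `b` inside `Ω` along which `f` is strictly
increasing (transversality to the Stokes lines). -/
def MonoPath (Ω : Set ℂ) (f : ℂ → ℝ) (a b : ℂ) : Prop :=
  ∃ p : ℝ → ℂ, ContinuousOn p (Icc 0 1) ∧ (∀ t ∈ Icc (0:ℝ) 1, p t ∈ Ω) ∧
    p 0 = a ∧ p 1 = b ∧ StrictMonoOn (fun t => f (p t)) (Icc 0 1)

/-!
Evaluating `u₁ = c₂ u₂ + c₃ u₃` at `x₃`, where `u₃` is normalized, and `u₄ = c̃₂ ũ₂ + c̃₃ ũ₃`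
at `x₂` gives `we₁(x₃) = c₂ we₂(x₃)` and `we₄(x₂) = c̃₃ we₃(x₂)`. The pairing
`we⁺ we⁻ - wo⁺ wo⁻` of a `+` and a `-` solution is constant on `Ω`, so `we₃(x₂) = we₂(x₃)` and
`we₄(x₂) = we₂(x₄)`; hence `(c₂ c̃₃ - 1) we₂(x₃)² = we₁(x₃) we₂(x₄) - we₂(x₃)²`.

It remains to see that a `+` series normalized at `a` satisfies `we(b) = 1 + O(h)` whenever
`Re Zα` increases along a path from `a` to `b`. On an arc along which `Zα` moves linearly with
speed `Δ`, `Re Δ > 0`, the odd part obeys `wo' = Ψ we - (2 Δ / h) wo`; the damping keeps it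
`O(h)`, and then `we' = Ψ wo` moves the even part by `O(h)`. Such arcs are segments in the chart
`Zα`, and they can be chained along the given path while avoiding the discrete set where
`H' / H` may fail to be continuous.
-/

open Metric Filter Topology Asymptotics

def wkbEvenPart (η : ℂ) : ℂ × ℂ →ₗ[ℂ] ℂ :=
  (η / 4) • (LinearMap.fst ℂ ℂ ℂ + I • LinearMap.snd ℂ ℂ ℂ) +
    (η⁻¹ / 4) • (I • LinearMap.fst ℂ ℂ ℂ + LinearMap.snd ℂ ℂ ℂ)

def wkbOddPart (η : ℂ) : ℂ × ℂ →ₗ[ℂ] ℂ :=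
  (η / 4) • (LinearMap.fst ℂ ℂ ℂ + I • LinearMap.snd ℂ ℂ ℂ) -
    (η⁻¹ / 4) • (I • LinearMap.fst ℂ ℂ ℂ + LinearMap.snd ℂ ℂ ℂ)

section WKBVectors

variable {h : ℝ} {Z H we wo : ℂ → ℂ} {x : ℂ}

lemma wkbMinus_eq_wkbPlus_neg : wkbMinus h Z H we wo = wkbPlus h (-Z) H wo we := by
  ext x <;> simp [wkbMinus, wkbPlus, neg_div]

lemma wkbEvenPart_wkbPlus (hH : H x ≠ 0) :
    wkbEvenPart (H x) (wkbPlus h Z H we wo x) = exp (Z x / h) * we x := by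
  simp only [wkbEvenPart, wkbPlus, LinearMap.add_apply, LinearMap.smul_apply, LinearMap.fst_apply,
    LinearMap.snd_apply, smul_eq_mul]
  field_simp
  ring_nf
  simp only [I_sq]
  ring

lemma wkbOddPart_wkbPlus (hH : H x ≠ 0) :
    wkbOddPart (H x) (wkbPlus h Z H we wo x) = exp (Z x / h) * wo x := by
  simp only [wkbOddPart, wkbPlus, LinearMap.sub_apply, LinearMap.add_apply, LinearMap.smul_apply,
    LinearMap.fst_apply, LinearMap.snd_apply, smul_eq_mul]
  field_simp
  ring_nf
  simp only [I_sq]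
  ring

lemma wkbEvenPart_wkbMinus (hH : H x ≠ 0) :
    wkbEvenPart (H x) (wkbMinus h Z H we wo x) = exp (-Z x / h) * wo x := by
  rw [wkbMinus_eq_wkbPlus_neg, wkbEvenPart_wkbPlus hH, Pi.neg_apply]

lemma wkbOddPart_wkbMinus (hH : H x ≠ 0) :
    wkbOddPart (H x) (wkbMinus h Z H we wo x) = exp (-Z x / h) * we x := by
  rw [wkbMinus_eq_wkbPlus_neg, wkbOddPart_wkbPlus hH, Pi.neg_apply]

variable {we' wo' we'' wo'' : ℂ → ℂ} {a b : ℂ}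

lemma eq_mul_of_wkbPlus_eq (hH : H x ≠ 0) (hwo'' : wo'' x = 0)
    (heq : wkbPlus h Z H we wo x = a • wkbPlus h Z H we' wo' x + b • wkbMinus h Z H we'' wo'' x) :
    we x = a * we' x := by
  have := congrArg (wkbEvenPart (H x)) heq
  rw [map_add, map_smul, map_smul, wkbEvenPart_wkbPlus hH, wkbEvenPart_wkbPlus hH,
    wkbEvenPart_wkbMinus hH, hwo''] at this
  exact mul_left_cancel₀ (exp_ne_zero _) (by simpa [mul_left_comm] using this)

lemma eq_mul_of_wkbMinus_eq (hH : H x ≠ 0) (hwo' : wo' x = 0)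
    (heq : wkbMinus h Z H we wo x = a • wkbPlus h Z H we' wo' x + b • wkbMinus h Z H we'' wo'' x) :
    we x = b * we'' x := by
  have := congrArg (wkbOddPart (H x)) heq
  rw [map_add, map_smul, map_smul, wkbOddPart_wkbMinus hH, wkbOddPart_wkbPlus hH,
    wkbOddPart_wkbMinus hH, hwo'] at this
  exact mul_left_cancel₀ (exp_ne_zero _) (by simpa [mul_left_comm] using this)

end WKBVectors

lemma analyticOnNhd_of_forall_hasDerivAt {Ω : Set ℂ} (hΩ : IsOpen Ω) {F f : ℂ → ℂ}
    (hF : ∀ x ∈ Ω, HasDerivAt F (f x) x) : AnalyticOnNhd ℂ F Ω :=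
  DifferentiableOn.analyticOnNhd (fun x hx => (hF x hx).differentiableAt.differentiableWithinAt) hΩ

lemma continuousOn_of_forall_hasDerivAt {Ω : Set ℂ} (hΩ : IsOpen Ω) {F f : ℂ → ℂ}
    (hF : ∀ x ∈ Ω, HasDerivAt F (f x) x) : ContinuousOn f Ω :=
  ((analyticOnNhd_of_forall_hasDerivAt hΩ hF).deriv.continuousOn).congr fun x hx =>
    ((hF x hx).deriv).symm

lemma continuousAt_of_continuousAt_mul {φ g : ℂ → ℂ} {x : ℂ}
    (hφg : ContinuousAt (fun y => φ y * g y) x) (hg : ContinuousAt g x) (hgx : g x ≠ 0) :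
    ContinuousAt φ x :=
  (hφg.div hg hgx).congr <| (hg.eventually_ne hgx).mono fun _ hy => mul_div_cancel_right₀ _ hy

def IsWKBSystem (Ω : Set ℂ) (φ : ℂ → ℂ) (s : ℂ) (κ u v : ℂ → ℂ) : Prop :=
  ∀ x ∈ Ω, HasDerivAt u (φ x * v x) x ∧ HasDerivAt v (φ x * u x - s * κ x * v x) x

lemma IsWKBSum.isWKBSystem {Ω : Set ℂ} {h : ℝ} {s : ℂ} {sq H : ℂ → ℂ} {x₀ : ℂ} {we wo : ℂ → ℂ}
    (hw : IsWKBSum Ω h s sq H x₀ we wo) :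
    IsWKBSystem Ω (fun x => deriv H x / H x) s (fun x => 2 * sq x / h) we wo :=
  hw.2.2

namespace IsWKBSystem

variable {Ω : Set ℂ} {φ κ u v : ℂ → ℂ} {s : ℂ}

lemma continuousOn_fst (hsys : IsWKBSystem Ω φ s κ u v) : ContinuousOn u Ω :=
  fun x hx => (hsys x hx).1.continuousAt.continuousWithinAt

lemma continuousOn_snd (hsys : IsWKBSystem Ω φ s κ u v) : ContinuousOn v Ω :=
  fun x hx => (hsys x hx).2.continuousAt.continuousWithinAt

/-- Wherever the solution does not vanish, the ODE exhibits `φ` as a quotient of continuous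
functions. -/
lemma continuousAt_coeff (hΩ : IsOpen Ω) (hκ : ContinuousOn κ Ω)
    (hsys : IsWKBSystem Ω φ s κ u v) {x : ℂ} (hx : x ∈ Ω) (hne : u x ≠ 0 ∨ v x ≠ 0) :
    ContinuousAt φ x := by
  have hΩx : Ω ∈ 𝓝 x := hΩ.mem_nhds hx
  rcases hne with hu | hv
  · have hφu : ContinuousAt (fun y => φ y * u y) x := by
      have hv' := continuousOn_of_forall_hasDerivAt hΩ fun y hy => (hsys y hy).2
      have hκv : ContinuousAt (fun y => s * κ y * v y) x :=
        (continuousAt_const.mul (hκ.continuousAt hΩx)).mul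
          (hsys.continuousOn_snd.continuousAt hΩx)
      exact ((hv'.continuousAt hΩx).add hκv).congr
        (Eventually.of_forall fun y => by simp only [Pi.add_apply]; ring)
    exact continuousAt_of_continuousAt_mul hφu (hsys.continuousOn_fst.continuousAt hΩx) hu
  · exact continuousAt_of_continuousAt_mul
      ((continuousOn_of_forall_hasDerivAt hΩ fun y hy => (hsys y hy).1).continuousAt hΩx)
      (hsys.continuousOn_snd.continuousAt hΩx) hv

lemma eventually_continuousAt_coeff (hΩ : IsOpen Ω) (hΩc : IsPreconnected Ω)
    (hκ : ContinuousOn κ Ω) (hsys : IsWKBSystem Ω φ s κ u v) {a : ℂ} (ha : a ∈ Ω)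
    (hua : u a ≠ 0) : ∀ᶠ x in codiscreteWithin Ω, ContinuousAt φ x := by
  have hne := ((analyticOnNhd_of_forall_hasDerivAt hΩ fun x hx => (hsys x hx).1
    ).eqOn_zero_or_eventually_ne_zero_of_preconnected hΩc).resolve_left fun h => hua (h ha)
  filter_upwards [hne, self_mem_codiscreteWithin Ω] with x hux hx
  exact hsys.continuousAt_coeff hΩ hκ hx (Or.inl hux)

lemma pairing_eq (hΩ : IsOpen Ω) (hΩc : IsPreconnected Ω) {u' v' : ℂ → ℂ}
    (hsys : IsWKBSystem Ω φ s κ u v) (hsys' : IsWKBSystem Ω φ (-s) κ u' v')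
    {x y : ℂ} (hx : x ∈ Ω) (hy : y ∈ Ω) :
    u x * u' x - v x * v' x = u y * u' y - v y * v' y := by
  have hderiv : ∀ z ∈ Ω, HasDerivAt (fun z => u z * u' z - v z * v' z) 0 z := fun z hz =>
    (((hsys z hz).1.mul (hsys' z hz).1).sub ((hsys z hz).2.mul (hsys' z hz).2)).congr_deriv
      (by ring)
  exact hΩ.is_const_of_deriv_eq_zero hΩc
    (fun z hz => (hderiv z hz).differentiableAt.differentiableWithinAt)
    (fun z hz => (hderiv z hz).deriv) hx hy

end IsWKBSystem

lemma IsWKBSum.apply_eq_apply {Ω : Set ℂ} (hΩ : IsOpen Ω) (hΩc : IsPreconnected Ω) {h : ℝ}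
    {sq H : ℂ → ℂ} {a b : ℂ} {u v u' v' : ℂ → ℂ} (hw : IsWKBSum Ω h 1 sq H a u v)
    (hw' : IsWKBSum Ω h (-1) sq H b u' v') (ha : a ∈ Ω) (hb : b ∈ Ω) : u b = u' a := by
  have := hw.isWKBSystem.pairing_eq hΩ hΩc hw'.isWKBSystem hb ha
  rwa [hw.1, hw.2.1, hw'.1, hw'.2.1, mul_one, zero_mul, sub_zero, one_mul, mul_zero,
    sub_zero] at this

lemma IsWKBSum.continuousAt_coeff {Ω : Set ℂ} (hΩ : IsOpen Ω) {h : ℝ} {s : ℂ} {sq H : ℂ → ℂ}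
    (hsqc : ContinuousOn sq Ω) {x₀ : ℂ} {we wo : ℂ → ℂ} (hw : IsWKBSum Ω h s sq H x₀ we wo)
    (hx₀ : x₀ ∈ Ω) : ContinuousAt (fun x => deriv H x / H x) x₀ :=
  hw.isWKBSystem.continuousAt_coeff hΩ ((continuousOn_const.mul hsqc).div_const _) hx₀
    (Or.inl (by rw [hw.1]; exact one_ne_zero))

lemma IsWKBSum.eventually_continuousAt_coeff {Ω : Set ℂ} (hΩ : IsOpen Ω)
    (hΩc : IsPreconnected Ω) {h : ℝ} {s : ℂ} {sq H : ℂ → ℂ} (hsqc : ContinuousOn sq Ω) {x₀ : ℂ}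
    {we wo : ℂ → ℂ} (hw : IsWKBSum Ω h s sq H x₀ we wo) (hx₀ : x₀ ∈ Ω) :
    ∀ᶠ x in codiscreteWithin Ω, ContinuousAt (fun x => deriv H x / H x) x :=
  hw.isWKBSystem.eventually_continuousAt_coeff hΩ hΩc ((continuousOn_const.mul hsqc).div_const _)
    hx₀ (by rw [hw.1]; exact one_ne_zero)

lemma norm_le_of_hasDerivAt_damped {O F : ℝ → ℂ} {μ : ℂ} {M : ℝ} (hμ : 0 < μ.re)
    (hO : ∀ t ∈ Icc (0:ℝ) 1, HasDerivAt O (F t - μ * O t) t)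
    (hF : ∀ t ∈ Icc (0:ℝ) 1, ‖F t‖ ≤ M) :
    ∀ t ∈ Icc (0:ℝ) 1, ‖O t‖ ≤ ‖O 0‖ + M / μ.re := by
  set c := μ.re
  have hM : 0 ≤ M := (norm_nonneg _).trans (hF 0 (left_mem_Icc.2 zero_le_one))
  have hexp : ∀ t : ℝ, HasDerivAt (fun t : ℝ => exp (μ * t)) (μ * exp (μ * t)) t := fun t => by
    simpa [mul_comm] using ((hasDerivAt_id (t : ℂ)).const_mul μ).cexp.comp_ofReal
  have hnorm_exp : ∀ t : ℝ, ‖exp (μ * t)‖ = Real.exp (c * t) := fun t => by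
    rw [norm_exp]; simp [c]
  -- variation of constants
  have hf : ∀ t ∈ Icc (0:ℝ) 1,
      HasDerivAt (fun t : ℝ => exp (μ * t) * O t - O 0) (exp (μ * t) * F t) t := fun t ht =>
    (((hexp t).mul (hO t ht)).sub_const (O 0)).congr_deriv (by ring)
  have hB : ∀ t : ℝ, HasDerivAt (fun t => M * (Real.exp (c * t) - 1) / c)
      (M * Real.exp (c * t)) t := fun t => by
    have := ((((hasDerivAt_id t).const_mul c).exp).sub_const 1).const_mul M |>.div_const c
    refine this.congr_deriv ?_
    field_simp
    simp
  have hfence := image_norm_le_of_norm_deriv_right_le_deriv_boundary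
    (fun t ht => (hf t ht).continuousAt.continuousWithinAt)
    (fun t ht => (hf t (Ico_subset_Icc_self ht)).hasDerivWithinAt) (by simp) hB
    (fun t ht => by
      rw [norm_mul, hnorm_exp, mul_comm M]
      exact mul_le_mul_of_nonneg_left (hF t (Ico_subset_Icc_self ht)) (Real.exp_pos _).le)
  intro t ht
  have h1 : Real.exp (c * t) * ‖O t‖ ≤ ‖O 0‖ + M * (Real.exp (c * t) - 1) / c := by
    have := norm_le_insert' (exp (μ * t) * O t) (O 0)
    rw [norm_mul, hnorm_exp] at this
    linarith [hfence ht]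
  have h2 : 1 ≤ Real.exp (c * t) := Real.one_le_exp (mul_nonneg hμ.le ht.1)
  have h3 : ‖O 0‖ + M * (Real.exp (c * t) - 1) / c ≤ Real.exp (c * t) * (‖O 0‖ + M / c) := by
    have : M * (Real.exp (c * t) - 1) / c = Real.exp (c * t) * (M / c) - M / c := by ring
    rw [this]
    nlinarith [norm_nonneg (O 0), div_nonneg hM hμ.le]
  exact le_of_mul_le_mul_left (h1.trans h3) (Real.exp_pos _)

lemma damped_system_estimate {W O Ψ : ℝ → ℂ} {μ : ℂ} {K : ℝ} (hμ : 0 < μ.re)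
    (hK : K ^ 2 ≤ μ.re / 2)
    (hW : ∀ t ∈ Icc (0:ℝ) 1, HasDerivAt W (Ψ t * O t) t)
    (hO : ∀ t ∈ Icc (0:ℝ) 1, HasDerivAt O (Ψ t * W t - μ * O t) t)
    (hΨ : ∀ t ∈ Icc (0:ℝ) 1, ‖Ψ t‖ ≤ K) :
    ‖W 1 - W 0‖ ≤ K * (‖O 0‖ + 2 * K * (‖W 0‖ + K * ‖O 0‖) / μ.re) ∧
      ‖O 1‖ ≤ ‖O 0‖ + 2 * K * (‖W 0‖ + K * ‖O 0‖) / μ.re := by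
  set c := μ.re
  have hK0 : 0 ≤ K := (norm_nonneg _).trans (hΨ 0 (left_mem_Icc.2 zero_le_one))
  obtain ⟨tm, htm, hmax⟩ := isCompact_Icc.exists_isMaxOn (nonempty_Icc.2 zero_le_one)
    (fun t ht => (hW t ht).continuousAt.continuousWithinAt.norm : ContinuousOn (‖W ·‖) _)
  set N := ‖W tm‖
  have hN0 : 0 ≤ N := norm_nonneg _
  have hO_le : ∀ t ∈ Icc (0:ℝ) 1, ‖O t‖ ≤ ‖O 0‖ + K * N / c :=
    norm_le_of_hasDerivAt_damped hμ hO fun t ht => by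
      rw [norm_mul]; exact mul_le_mul (hΨ t ht) (hmax ht) (norm_nonneg _) hK0
  have hW_le : ∀ t ∈ Icc (0:ℝ) 1, ‖W t - W 0‖ ≤ K * (‖O 0‖ + K * N / c) * (t - 0) :=
    norm_image_sub_le_of_norm_deriv_le_segment' (fun t ht => (hW t ht).hasDerivWithinAt)
      fun t ht => by
        rw [norm_mul]
        exact mul_le_mul (hΨ t (Ico_subset_Icc_self ht)) (hO_le t (Ico_subset_Icc_self ht))
          (norm_nonneg _) hK0
  -- the a priori bound `N ≤ 2 (‖W 0‖ + K ‖O 0‖)` absorbs the term `K² N / c`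
  have hN : K * N / c ≤ 2 * K * (‖W 0‖ + K * ‖O 0‖) / c := by
    have hNle : N ≤ ‖W 0‖ + K * (‖O 0‖ + K * N / c) := by
      have := hW_le tm htm
      have htm1 : K * (‖O 0‖ + K * N / c) * (tm - 0) ≤ K * (‖O 0‖ + K * N / c) := by
        apply mul_le_of_le_one_right (by positivity); linarith [htm.2]
      linarith [norm_le_insert' (W tm) (W 0)]
    have hKN : K * (K * N / c) ≤ N / 2 := by
      have : K ^ 2 / c ≤ 1 / 2 := by rw [div_le_iff₀ hμ]; linarith
      calc K * (K * N / c) = N * (K ^ 2 / c) := by ring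
        _ ≤ N * (1 / 2) := by gcongr
        _ = N / 2 := by ring
    calc K * N / c ≤ K * (2 * (‖W 0‖ + K * ‖O 0‖)) / c := by gcongr; linarith
      _ = 2 * K * (‖W 0‖ + K * ‖O 0‖) / c := by ring
  refine ⟨?_, (hO_le 1 (right_mem_Icc.2 zero_le_one)).trans (by gcongr)⟩
  calc ‖W 1 - W 0‖ ≤ K * (‖O 0‖ + K * N / c) * (1 - 0) := hW_le 1 (right_mem_Icc.2 zero_le_one)
    _ ≤ _ := by rw [sub_zero, mul_one]; gcongr

/-- An arc in `Ω` through points of continuity of `φ` along which any primitive `Z` of `sq`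
moves linearly, `Z (γ t) = Z z + t Δ`, with increasing real part. -/
def ZStep (Ω : Set ℂ) (φ sq : ℂ → ℂ) (z w : ℂ) : Prop :=
  ∃ (γ : ℝ → ℂ) (Δ : ℂ), 0 < Δ.re ∧ γ 0 = z ∧ γ 1 = w ∧
    ∀ t ∈ Icc (0:ℝ) 1, γ t ∈ Ω ∧ ContinuousAt φ (γ t) ∧ HasDerivAt γ (Δ / sq (γ t)) t

section Estimates

variable {Ω : Set ℂ} {φ sq : ℂ → ℂ} {we wo : ℝ → ℂ → ℂ}

lemma ZStep.exists_bound (hΩ : IsOpen Ω) (hsq : ∀ x ∈ Ω, sq x ≠ 0) (hsqc : ContinuousOn sq Ω)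
    {z w : ℂ} (hstep : ZStep Ω φ sq z w) :
    ∃ K : ℝ, 0 ≤ K ∧ ∃ ρ : ℝ, 0 < ρ ∧ ∀ h : ℝ, 0 < h → h * K ^ 2 ≤ ρ → ∀ u v : ℂ → ℂ,
      IsWKBSystem Ω φ 1 (fun x => 2 * sq x / h) u v →
      ‖u w - u z‖ ≤ K * (‖v z‖ + K / ρ * ((‖u z‖ + K * ‖v z‖) * h)) ∧
        ‖v w‖ ≤ ‖v z‖ + K / ρ * ((‖u z‖ + K * ‖v z‖) * h) := by
  obtain ⟨γ, Δ, hΔ, rfl, rfl, hγ⟩ := hstep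
  set Ψ : ℝ → ℂ := fun t => φ (γ t) * (Δ / sq (γ t))
  have hΨc : ContinuousOn Ψ (Icc 0 1) := fun t ht => by
    obtain ⟨hγΩ, hφ, hγ'⟩ := hγ t ht
    exact ((hφ.comp hγ'.continuousAt).mul (continuousAt_const.div
      ((hsqc.continuousAt (hΩ.mem_nhds hγΩ)).comp hγ'.continuousAt)
        (hsq _ hγΩ))).continuousWithinAt
  obtain ⟨K, hK⟩ := isCompact_Icc.exists_bound_of_continuousOn hΨc
  refine ⟨K, (norm_nonneg _).trans (hK 0 (left_mem_Icc.2 zero_le_one)), Δ.re, hΔ,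
    fun h hh hhK u v hsys => ?_⟩
  have hμ : (2 * Δ / h).re = 2 * Δ.re / h := by rw [div_ofReal_re]; simp
  have hW : ∀ t ∈ Icc (0:ℝ) 1, HasDerivAt (fun t => u (γ t)) (Ψ t * v (γ t)) t := fun t ht =>
    ((hsys _ (hγ t ht).1).1.comp t (hγ t ht).2.2).congr_deriv (by simp only [Ψ]; ring)
  have hO : ∀ t ∈ Icc (0:ℝ) 1, HasDerivAt (fun t => v (γ t))
      (Ψ t * u (γ t) - 2 * Δ / h * v (γ t)) t := fun t ht => by
    refine ((hsys _ (hγ t ht).1).2.comp t (hγ t ht).2.2).congr_deriv ?_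
    have := hsq _ (hγ t ht).1
    simp only [Ψ]
    field_simp
  have hK2 : K ^ 2 ≤ (2 * Δ / h).re / 2 := by
    rw [hμ, show 2 * Δ.re / h / 2 = Δ.re / h by ring, le_div_iff₀ hh]; linarith
  have := damped_system_estimate (by rw [hμ]; positivity) hK2 hW hO hK
  rwa [hμ, show 2 * K * (‖u (γ 0)‖ + K * ‖v (γ 0)‖) / (2 * Δ.re / h) =
    K / Δ.re * ((‖u (γ 0)‖ + K * ‖v (γ 0)‖) * h) by field_simp] at this

lemma ZStep.isBigO (hΩ : IsOpen Ω) (hsq : ∀ x ∈ Ω, sq x ≠ 0) (hsqc : ContinuousOn sq Ω)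
    {z w : ℂ} (hstep : ZStep Ω φ sq z w)
    (hsys : ∀ᶠ h : ℝ in 𝓝[>] 0, IsWKBSystem Ω φ 1 (fun x => 2 * sq x / h) (we h) (wo h))
    (hwe : (fun h => we h z - 1) =O[𝓝[>] 0] id) (hwo : (fun h => wo h z) =O[𝓝[>] 0] id) :
    (fun h => we h w - 1) =O[𝓝[>] 0] id ∧ (fun h => wo h w) =O[𝓝[>] 0] id := by
  obtain ⟨K, hK, ρ, hρ, hbound⟩ := hstep.exists_bound hΩ hsq hsqc
  set B : ℝ → ℝ := fun h => ‖wo h z‖ + K / ρ * ((‖we h z‖ + K * ‖wo h z‖) * h)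
  have hB : B =O[𝓝[>] 0] id := by
    have hid : (id : ℝ → ℝ) =O[𝓝[>] 0] (fun _ => (1:ℝ)) :=
      (tendsto_nhdsWithin_of_tendsto_nhds (tendsto_id (x := 𝓝 (0:ℝ)))).isBigO_one ℝ
    have hwe1 : (fun h => we h z) =O[𝓝[>] 0] (fun _ => (1:ℝ)) :=
      ((hwe.trans hid).add (isBigO_const_const (1:ℂ) one_ne_zero _)).congr_left fun _ => by ring
    have hprod : (fun h => (‖we h z‖ + K * ‖wo h z‖) * h) =O[𝓝[>] 0] id :=
      ((hwe1.norm_left.add ((hwo.trans hid).norm_left.const_mul_left K)).mul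
        (isBigO_refl id (𝓝[>] 0))).congr_right fun _ => one_mul _
    exact hwo.norm_left.add (hprod.const_mul_left _)
  have hsmall : ∀ᶠ h in 𝓝[>] 0, h * K ^ 2 ≤ ρ := by
    filter_upwards [Ioo_mem_nhdsGT (show 0 < ρ / (K ^ 2 + 1) by positivity)] with h hh
    have := (lt_div_iff₀ (by positivity : (0:ℝ) < K ^ 2 + 1)).1 hh.2
    nlinarith [hh.1, sq_nonneg K]
  have hbound' : ∀ᶠ h in 𝓝[>] 0, ‖we h w - we h z‖ ≤ K * ‖B h‖ ∧ ‖wo h w‖ ≤ ‖B h‖ := by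
    filter_upwards [hsys, hsmall, self_mem_nhdsWithin] with h hsysh hhK hh
    have hB0 : 0 ≤ B h := by simp only [B]; have : (0:ℝ) < h := hh; positivity
    rw [Real.norm_of_nonneg hB0]
    exact hbound h hh hhK _ _ hsysh
  have hdiff : (fun h => we h w - we h z) =O[𝓝[>] 0] id :=
    (IsBigO.of_bound K (hbound'.mono fun _ => And.left)).trans hB
  exact ⟨(hdiff.add hwe).congr_left fun _ => by ring,
    (IsBigO.of_bound' (hbound'.mono fun _ => And.right)).trans hB⟩

lemma isBigO_of_reflTransGen_zStep (hΩ : IsOpen Ω) (hsq : ∀ x ∈ Ω, sq x ≠ 0)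
    (hsqc : ContinuousOn sq Ω) {a b : ℂ} (hab : Relation.ReflTransGen (ZStep Ω φ sq) a b)
    (hsys : ∀ᶠ h : ℝ in 𝓝[>] 0, IsWKBSystem Ω φ 1 (fun x => 2 * sq x / h) (we h) (wo h))
    (hwe : (fun h => we h a - 1) =O[𝓝[>] 0] id) (hwo : (fun h => wo h a) =O[𝓝[>] 0] id) :
    (fun h => we h b - 1) =O[𝓝[>] 0] id ∧ (fun h => wo h b) =O[𝓝[>] 0] id := by
  induction hab with
  | refl => exact ⟨hwe, hwo⟩
  | tail _ hstep ih => exact hstep.isBigO hΩ hsq hsqc hsys ih.1 ih.2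

end Estimates

lemma rel_zero_one_of_forall_near {R : ℝ → ℝ → Prop} (htrans : ∀ a b c, R a b → R b c → R a c)
    {S : Set ℝ} (hS : (Icc 0 1 \ S).Finite) (h0 : 0 ∈ S) (h1 : 1 ∈ S)
    (hloc : ∀ t ∈ Icc (0:ℝ) 1, ∃ δ > 0, ∀ a ∈ S ∩ Icc 0 1, ∀ b ∈ S ∩ Icc 0 1,
      a ∈ ball t δ → b ∈ ball t δ → a < b → R a b) :
    R 0 1 := by
  choose! δ hδ hR using hloc
  obtain ⟨ε, hε, hleb⟩ := lebesgue_number_lemma_of_metric (isCompact_Icc (a := (0:ℝ)) (b := 1))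
    (c := fun t : Icc (0:ℝ) 1 => ball (t : ℝ) (δ t)) (fun _ => isOpen_ball)
    fun t ht => mem_iUnion.2 ⟨⟨t, ht⟩, mem_ball_self (hδ t ht)⟩
  have hnear : ∀ a ∈ S ∩ Icc 0 1, ∀ b ∈ S ∩ Icc 0 1, a < b → b - a < ε → R a b := by
    intro a ha b hb hab hbε
    obtain ⟨t, ht⟩ := hleb a ha.2
    refine hR t t.2 a ha b hb (ht (mem_ball_self hε)) (ht ?_) hab
    rw [mem_ball, Real.dist_eq, abs_of_pos (sub_pos.2 hab)]
    exact hbε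
  have key : ∀ n : ℕ, ∀ s ∈ S ∩ Icc 0 1, 0 < s → s ≤ n * (ε / 2) → R 0 s := by
    intro n
    induction n with
    | zero => intro s _ hs hsn; rw [Nat.cast_zero, zero_mul] at hsn; linarith
    | succ n ih =>
      intro s hs hs0 hsn
      by_cases hsε : s < ε
      · exact hnear 0 ⟨h0, left_mem_Icc.2 zero_le_one⟩ s hs hs0 (by linarith)
      obtain ⟨t, ht, htS⟩ := ((Ioo_infinite (show s - ε < min s (n * (ε / 2)) by
        push_cast at hsn; exact lt_min (by linarith) (by linarith))).sdiff hS).nonempty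
      have htI : t ∈ Icc (0:ℝ) 1 :=
        ⟨by linarith [ht.1], by linarith [ht.2, min_le_left s (n * (ε / 2)), hs.2.2]⟩
      have htS : t ∈ S := by_contra fun h => htS ⟨htI, h⟩
      exact htrans _ _ _
        (ih t ⟨htS, htI⟩ (by linarith [ht.1]) (ht.2.trans_le (min_le_right _ _)).le)
        (hnear t ⟨htS, htI⟩ s hs (ht.2.trans_le (min_le_left _ _)) (by linarith [ht.1]))
  obtain ⟨n, hn⟩ := exists_nat_ge (2 / ε)
  exact key n 1 ⟨h1, right_mem_Icc.2 zero_le_one⟩ one_pos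
    (by rw [div_le_iff₀ hε] at hn; linarith)

section Chains

variable {Ω : Set ℂ} {φ sq Z : ℂ → ℂ}

lemma exists_localInverse_of_hasDerivAt (hΩ : IsOpen Ω) (hZ : ∀ x ∈ Ω, HasDerivAt Z (sq x) x)
    (hsq : ∀ x ∈ Ω, sq x ≠ 0) {z₀ : ℂ} (hz₀ : z₀ ∈ Ω) :
    ∃ r > 0, ∃ ρ > 0, ∃ g : ℂ → ℂ, closedBall z₀ r ⊆ Ω ∧
      (∀ ζ ∈ ball (Z z₀) ρ, g ζ ∈ closedBall z₀ r ∧ Z (g ζ) = ζ ∧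
        HasDerivAt g (sq (g ζ))⁻¹ ζ) ∧
      ∀ᶠ z in 𝓝 z₀, g (Z z) = z := by
  have hstrict : HasStrictDerivAt Z (sq z₀) z₀ := by
    simpa [(hZ z₀ hz₀).deriv] using
      (analyticOnNhd_of_forall_hasDerivAt hΩ hZ z₀ hz₀).hasStrictDerivAt
  set e := (hstrict.hasStrictFDerivAt_equiv (hsq z₀ hz₀)).toOpenPartialHomeomorph Z
  have he : (e : ℂ → ℂ) = Z := rfl
  have hz₀e : z₀ ∈ e.source := HasStrictFDerivAt.mem_toOpenPartialHomeomorph_source _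
  obtain ⟨r, hr, hrsub⟩ := nhds_basis_closedBall.mem_iff.1
    (inter_mem (hΩ.mem_nhds hz₀) (e.open_source.mem_nhds hz₀e))
  have hZz₀ : Z z₀ ∈ e.target ∩ e.symm ⁻¹' ball z₀ r :=
    ⟨he ▸ e.map_source hz₀e, by simp [← he, e.left_inv hz₀e, hr]⟩
  obtain ⟨ρ, hρ, hρsub⟩ := Metric.isOpen_iff.1 (e.isOpen_inter_preimage_symm isOpen_ball) _ hZz₀
  refine ⟨r, hr, ρ, hρ, e.symm, fun x hx => (hrsub hx).1, fun ζ hζ => ?_, ?_⟩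
  · obtain ⟨hζe, hζr⟩ := hρsub hζ
    have hgΩ : e.symm ζ ∈ Ω := (hrsub (ball_subset_closedBall hζr)).1
    exact ⟨ball_subset_closedBall hζr, e.right_inv hζe,
      e.hasDerivAt_symm hζe (hsq _ hgΩ) (hZ _ hgΩ)⟩
  · exact e.eventually_left_inverse hz₀e

lemma subsingleton_setOf_mem_segment {p b : ℂ} {m : ℝ} (hm : p.re ≠ m) (hb : b ≠ p) :
    {y : ℝ | b ∈ segment ℝ p ⟨m, y⟩}.Subsingleton := by
  have key : ∀ y : ℝ, b ∈ segment ℝ p ⟨m, y⟩ →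
      ∃ θ : ℝ, θ ≠ 0 ∧ b.re - p.re = θ * (m - p.re) ∧ b.im - p.im = θ * (y - p.im) := by
    rintro y hy
    rw [segment_eq_image_lineMap] at hy
    obtain ⟨θ, -, rfl⟩ := hy
    refine ⟨θ, fun hθ => hb (by simp [hθ]), ?_, ?_⟩ <;>
      simp [AffineMap.lineMap_apply_module', Complex.add_re, Complex.add_im]
  intro y hy y' hy'
  obtain ⟨θ, hθ, hre, him⟩ := key y hy
  obtain ⟨θ', -, hre', him'⟩ := key y' hy'
  have hθθ' : θ = θ' := mul_right_cancel₀ (sub_ne_zero.2 hm.symm) (hre.symm.trans hre')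
  subst hθθ'
  have := mul_left_cancel₀ hθ (him.symm.trans him')
  linarith

lemma zStep_of_segment {g : ℂ → ℂ} {ζ₁ ζ₂ : ℂ} (hre : ζ₁.re < ζ₂.re)
    (hg : ∀ ζ ∈ segment ℝ ζ₁ ζ₂,
      g ζ ∈ Ω ∧ ContinuousAt φ (g ζ) ∧ HasDerivAt g (sq (g ζ))⁻¹ ζ) :
    ZStep Ω φ sq (g ζ₁) (g ζ₂) := by
  refine ⟨fun t => g (AffineMap.lineMap ζ₁ ζ₂ t), ζ₂ - ζ₁, by simpa using hre, by simp, by simp,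
    fun t ht => ?_⟩
  have hmem : AffineMap.lineMap ζ₁ ζ₂ t ∈ segment ℝ ζ₁ ζ₂ := by
    rw [segment_eq_image_lineMap]; exact mem_image_of_mem _ ht
  obtain ⟨hΩ, hφ, hg'⟩ := hg _ hmem
  exact ⟨hΩ, hφ, (hg'.comp t AffineMap.hasDerivAt_lineMap).congr_deriv (by ring)⟩

lemma exists_detour_avoiding {B : Set ℂ} (hB : B.Finite) {ζ₁ ζ₂ : ℂ} (hlt : ζ₁.re < ζ₂.re)
    {a b : ℝ} (hab : a < b) :
    ∃ y ∈ Ioo a b,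
      (∀ ζ ∈ segment ℝ ζ₁ ⟨(ζ₁.re + ζ₂.re) / 2, y⟩, ζ ∈ B → ζ = ζ₁) ∧
      (∀ ζ ∈ segment ℝ ⟨(ζ₁.re + ζ₂.re) / 2, y⟩ ζ₂, ζ ∈ B → ζ = ζ₂) := by
  set m := (ζ₁.re + ζ₂.re) / 2
  set Y := (⋃ c ∈ B \ {ζ₁}, {y : ℝ | c ∈ segment ℝ ζ₁ ⟨m, y⟩}) ∪
    ⋃ c ∈ B \ {ζ₂}, {y : ℝ | c ∈ segment ℝ ζ₂ ⟨m, y⟩}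
  -- segments from `ζ₁` (or `ζ₂`) to distinct points of the line `re = m` meet only there
  have hY : Y.Finite :=
    (hB.sdiff.biUnion fun c hc =>
        (subsingleton_setOf_mem_segment (by simp only [m]; linarith) hc.2).finite).union
      (hB.sdiff.biUnion fun c hc =>
        (subsingleton_setOf_mem_segment (by simp only [m]; linarith) hc.2).finite)
  obtain ⟨y, hy, hyY⟩ := ((Ioo_infinite hab).sdiff hY).nonempty
  refine ⟨y, hy, fun ζ hζ hζB => ?_, fun ζ hζ hζB => ?_⟩ <;> by_contra hne <;> apply hyY
  · exact Or.inl (mem_biUnion (x := ζ) ⟨hζB, hne⟩ hζ)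
  · exact Or.inr (mem_biUnion (x := ζ) ⟨hζB, hne⟩
      (show ζ ∈ segment ℝ ζ₂ ⟨m, y⟩ by rwa [segment_symm]))

lemma mk_mem_ball_of_mem_ball {ζ₀ ζ₁ ζ₂ : ℂ} {ρ y : ℝ} (h₁ : ζ₁ ∈ ball ζ₀ (ρ / 4))
    (h₂ : ζ₂ ∈ ball ζ₀ (ρ / 4)) (hy : y ∈ Ioo (ζ₀.im - ρ / 2) (ζ₀.im + ρ / 2)) :
    (⟨(ζ₁.re + ζ₂.re) / 2, y⟩ : ℂ) ∈ ball ζ₀ ρ := by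
  rw [mem_ball, dist_eq_norm] at h₁ h₂ ⊢
  have hre₁ := (abs_re_le_norm (ζ₁ - ζ₀)).trans_lt h₁
  have hre₂ := (abs_re_le_norm (ζ₂ - ζ₀)).trans_lt h₂
  have him : |y - ζ₀.im| < ρ / 2 := abs_sub_lt_iff.2 ⟨by linarith [hy.2], by linarith [hy.1]⟩
  have hre : |(ζ₁.re + ζ₂.re) / 2 - ζ₀.re| < ρ / 4 := by
    simp only [sub_re] at hre₁ hre₂
    rw [abs_lt] at hre₁ hre₂ ⊢; constructor <;> linarith
  refine (norm_le_abs_re_add_abs_im _).trans_lt ?_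
  simp only [sub_re, sub_im]
  linarith [norm_nonneg (ζ₁ - ζ₀)]

lemma exists_ball_reflTransGen_zStep (hΩ : IsOpen Ω) (hZ : ∀ x ∈ Ω, HasDerivAt Z (sq x) x)
    (hsq : ∀ x ∈ Ω, sq x ≠ 0) (hφ : ∀ᶠ x in codiscreteWithin Ω, ContinuousAt φ x)
    {z₀ : ℂ} (hz₀ : z₀ ∈ Ω) :
    ∃ r > 0, ∀ z ∈ ball z₀ r, ∀ w ∈ ball z₀ r, ContinuousAt φ z → ContinuousAt φ w →
      (Z z).re < (Z w).re → Relation.ReflTransGen (ZStep Ω φ sq) z w := by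
  obtain ⟨R, -, ρ, hρ, g, hRΩ, hg, hleft⟩ := exists_localInverse_of_hasDerivAt hΩ hZ hsq hz₀
  set ζ₀ := Z z₀
  set B := {ζ ∈ ball ζ₀ ρ | ¬ContinuousAt φ (g ζ)}
  have hB : B.Finite := by
    refine Finite.of_finite_image (f := g) (((isCompact_closedBall z₀ R
      ).finite_sdiff_of_mem_codiscreteWithin (codiscreteWithin_mono hRΩ hφ)).subset ?_)
      fun ζ hζ ζ' hζ' h => ?_
    · rintro _ ⟨ζ, ⟨hζ, hζφ⟩, rfl⟩
      exact ⟨(hg ζ hζ).1, hζφ⟩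
    · rw [← (hg ζ hζ.1).2.1, h, (hg ζ' hζ'.1).2.1]
  have hgood : ∀ ζ ∈ ball ζ₀ ρ, ζ ∉ B → g ζ ∈ Ω ∧ ContinuousAt φ (g ζ) ∧
      HasDerivAt g (sq (g ζ))⁻¹ ζ := fun ζ hζ hζB =>
    ⟨hRΩ (hg ζ hζ).1, not_not.1 fun h => hζB ⟨hζ, h⟩, (hg ζ hζ).2.2⟩
  obtain ⟨r, hr, hrsub⟩ := Metric.mem_nhds_iff.1 (inter_mem
    ((hZ z₀ hz₀).continuousAt.preimage_mem_nhds (ball_mem_nhds ζ₀ (by positivity : 0 < ρ / 4)))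
    hleft)
  refine ⟨r, hr, fun z hz w hw hφz hφw hlt => ?_⟩
  obtain ⟨hζz, hgz⟩ : Z z ∈ ball ζ₀ (ρ / 4) ∧ g (Z z) = z := hrsub hz
  obtain ⟨hζw, hgw⟩ : Z w ∈ ball ζ₀ (ρ / 4) ∧ g (Z w) = w := hrsub hw
  obtain ⟨y, hy, hseg₁, hseg₂⟩ :=
    exists_detour_avoiding hB hlt (show ζ₀.im - ρ / 2 < ζ₀.im + ρ / 2 by linarith)
  set ζ : ℂ := ⟨((Z z).re + (Z w).re) / 2, y⟩
  have hζ : ζ ∈ ball ζ₀ ρ := mk_mem_ball_of_mem_ball hζz hζw hy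
  have hsub : ∀ ζ' ∈ ball ζ₀ (ρ / 4), segment ℝ ζ' ζ ⊆ ball ζ₀ ρ ∧ segment ℝ ζ ζ' ⊆ ball ζ₀ ρ :=
    fun ζ' hζ' => ⟨(convex_ball ζ₀ ρ).segment_subset (ball_subset_ball (by linarith) hζ') hζ,
      (convex_ball ζ₀ ρ).segment_subset hζ (ball_subset_ball (by linarith) hζ')⟩
  have hstep₁ : ZStep Ω φ sq (g (Z z)) (g ζ) := zStep_of_segment (by simp only [ζ]; linarith)
    fun ζ' hζ' => hgood ζ' ((hsub _ hζz).1 hζ') fun hB => by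
      obtain rfl := hseg₁ ζ' hζ' hB
      exact hB.2 (by rwa [hgz])
  have hstep₂ : ZStep Ω φ sq (g ζ) (g (Z w)) := zStep_of_segment (by simp only [ζ]; linarith)
    fun ζ' hζ' => hgood ζ' ((hsub _ hζw).2 hζ') fun hB => by
      obtain rfl := hseg₂ ζ' hζ' hB
      exact hB.2 (by rwa [hgw])
  rw [← hgz, ← hgw]
  exact (Relation.ReflTransGen.single hstep₁).tail hstep₂

lemma MonoPath.reflTransGen_zStep (hΩ : IsOpen Ω)
    (hZ : ∀ x ∈ Ω, HasDerivAt Z (sq x) x) (hsq : ∀ x ∈ Ω, sq x ≠ 0)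
    (hφ : ∀ᶠ x in codiscreteWithin Ω, ContinuousAt φ x) {a b : ℂ}
    (hpath : MonoPath Ω (fun z => (Z z).re) a b) (ha : ContinuousAt φ a)
    (hb : ContinuousAt φ b) : Relation.ReflTransGen (ZStep Ω φ sq) a b := by
  obtain ⟨p, hpc, hpΩ, rfl, rfl, hmono⟩ := hpath
  have hinj : InjOn p (Icc 0 1) := fun s hs t ht hst => hmono.injOn hs ht (by simp only [hst])
  have himage : p '' Icc 0 1 ⊆ Ω := image_subset_iff.2 hpΩ
  have hS : (Icc 0 1 \ {t | ContinuousAt φ (p t)}).Finite := by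
    refine Finite.of_finite_image ((((isCompact_Icc.image_of_continuousOn hpc)
      ).finite_sdiff_of_mem_codiscreteWithin (codiscreteWithin_mono himage hφ)).subset ?_)
      (hinj.mono sdiff_subset)
    rintro _ ⟨t, ⟨ht, htφ⟩, rfl⟩
    exact ⟨mem_image_of_mem p ht, htφ⟩
  refine rel_zero_one_of_forall_near
    (R := fun s t => Relation.ReflTransGen (ZStep Ω φ sq) (p s) (p t))
    (fun _ _ _ => Relation.ReflTransGen.trans) hS ha hb fun t ht => ?_
  obtain ⟨r, hr, hchain⟩ := exists_ball_reflTransGen_zStep hΩ hZ hsq hφ (hpΩ t ht)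
  obtain ⟨δ, hδ, hpδ⟩ := Metric.continuousWithinAt_iff.1 (hpc t ht) r hr
  exact ⟨δ, hδ, fun s hs s' hs' hsδ hs'δ hss' =>
    hchain _ (hpδ hs.2 hsδ) _ (hpδ hs'.2 hs'δ) hs.1 hs'.1 (hmono hs.2 hs'.2 hss')⟩

end Chains

lemma MonoPath.isBigO_wkbSum {Ω : Set ℂ} {sq H Z : ℂ → ℂ} (hΩ : IsOpen Ω)
    (hZ : ∀ x ∈ Ω, HasDerivAt Z (sq x) x) (hsq : ∀ x ∈ Ω, sq x ≠ 0)
    (hφ : ∀ᶠ x in codiscreteWithin Ω, ContinuousAt (fun x => deriv H x / H x) x) {a b : ℂ}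
    (hpath : MonoPath Ω (fun z => (Z z).re) a b)
    (ha : ContinuousAt (fun x => deriv H x / H x) a)
    (hb : ContinuousAt (fun x => deriv H x / H x) b) {h₀ : ℝ} (hh₀ : 0 < h₀)
    {we wo : ℝ → ℂ → ℂ} (hw : ∀ h ∈ Ioc (0:ℝ) h₀, IsWKBSum Ω h 1 sq H a (we h) (wo h)) :
    (fun h => we h b - 1) =O[𝓝[>] 0] id := by
  have hw' : ∀ᶠ h in 𝓝[>] 0, IsWKBSum Ω h 1 sq H a (we h) (wo h) :=
    eventually_of_mem (Ioc_mem_nhdsGT hh₀) hw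
  refine (isBigO_of_reflTransGen_zStep hΩ hsq (continuousOn_of_forall_hasDerivAt hΩ hZ)
    (hpath.reflTransGen_zStep hΩ hZ hsq hφ ha hb) (hw'.mono fun h hh => hh.isWKBSystem)
    ?_ ?_).1
  · exact (isBigO_zero _ _).congr' (hw'.mono fun h hh => by simp [hh.1]) EventuallyEq.rfl
  · exact (isBigO_zero _ _).congr' (hw'.mono fun h hh => by simp [hh.2.1]) EventuallyEq.rfl

lemma isBigO_sub_one_of_mul_sq_eq {α : Type*} {l : Filter α} {g : α → ℝ} {c u v w : α → ℂ}
    (hg : Tendsto g l (𝓝 0)) (hu : (fun x => u x - 1) =O[l] g) (hv : (fun x => v x - 1) =O[l] g)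
    (hw : (fun x => w x - 1) =O[l] g)
    (hcuvw : ∀ᶠ x in l, (c x - 1) * v x ^ 2 = u x * w x - v x ^ 2) :
    (fun x => c x - 1) =O[l] g := by
  have hv1 : Tendsto v l (𝓝 1) := by
    simpa using (hv.trans_tendsto hg).add_const 1
  have hw1 : w =O[l] (fun _ => (1:ℝ)) := (by simpa using (hw.trans_tendsto hg).add_const 1 :
    Tendsto w l (𝓝 1)).isBigO_one ℝ
  have hv2 : (fun x => v x + 1) =O[l] (fun _ => (1:ℝ)) := (hv1.add_const 1).isBigO_one ℝ
  have hnum : (fun x => u x * w x - v x ^ 2) =O[l] g := by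
    have := (((hu.mul hw1).congr_right fun _ => mul_one _).add hw).sub
      ((hv.mul hv2).congr_right fun _ => mul_one _)
    exact this.congr_left fun x => by ring
  have hvlarge : ∀ᶠ x in l, (1:ℝ) / 2 ≤ ‖v x‖ := by
    have := (hv1.norm).eventually (Ioi_mem_nhds (show (1:ℝ) / 2 < ‖(1:ℂ)‖ by norm_num))
    exact this.mono fun x hx => le_of_lt hx
  refine (IsBigO.of_bound 4 ?_).trans hnum
  filter_upwards [hcuvw, hvlarge] with x hx hvx
  rw [← hx, norm_mul, norm_pow]
  nlinarith [norm_nonneg (c x - 1), sq_nonneg (‖v x‖ - 1 / 2)]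

lemma exists_bound_of_isBigO_nhdsGT {E : Type*} [Norm E] {F : ℝ → E} (hF : F =O[𝓝[>] 0] id)
    {h₀ : ℝ} (hh₀ : 0 < h₀) :
    ∃ C : ℝ, 0 < C ∧ ∃ h₁ ∈ Ioc (0:ℝ) h₀, ∀ h ∈ Ioc (0:ℝ) h₁, ‖F h‖ ≤ C * h := by
  obtain ⟨C, hC, hCF⟩ := hF.exists_pos
  obtain ⟨u, hu, hsub⟩ := mem_nhdsGT_iff_exists_Ioc_subset.1 hCF.bound
  refine ⟨C, hC, min h₀ u, ⟨lt_min hh₀ hu, min_le_left _ _⟩, fun h hh => ?_⟩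
  have := hsub ⟨hh.1, hh.2.trans (min_le_right _ _)⟩
  simpa [abs_of_pos hh.1] using this

theorem connection_coeff_c2_ct3_general
    (A : ℂ → ℂ)
    (lam : ℝ)
    -- the cut plane `Ω` (a neighborhood of the Stokes region minus the two branch cuts)
    (Ω : Set ℂ) (hΩopen : IsOpen Ω) (hΩconn : IsPreconnected Ω)
    (hnv : ∀ x ∈ Ω, A x ^ 2 - (lam : ℂ) ^ 2 ≠ 0)
    -- the branches
    (sq H : ℂ → ℂ)
    (hsq : ∀ x ∈ Ω, sq x ^ 2 = A x ^ 2 - (lam : ℂ) ^ 2)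
    (hH : ∀ x ∈ Ω, H x ≠ 0 ∧ (H x) ^ 4 = (A x + lam) / (A x - lam))
    -- phases based at the turning points `α` and `β`
    (Zα Zβ : ℂ → ℂ)
    (hZα : ∀ x ∈ Ω, HasDerivAt Zα (sq x) x)
    -- the base points, one in each sector
    (x₁ x₂ x₃ x₄ : ℂ) (hx₁ : x₁ ∈ Ω) (hx₂ : x₂ ∈ Ω) (hx₃ : x₃ ∈ Ω) (hx₄ : x₄ ∈ Ω)
    -- sector structure: monotone paths `Γ(x₁,x₃)`, `Γ(x₂,x₃)`, `Γ(x₂,x₄)`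
    (hp13 : MonoPath Ω (fun z => (Zα z).re) x₁ x₃)
    (hp23 : MonoPath Ω (fun z => (Zα z).re) x₂ x₃)
    (hp24 : MonoPath Ω (fun z => (Zα z).re) x₂ x₄)
    -- WKB series of `u₁, u₂ (and ũ₂), u₃ (and ũ₃), u₄`, for each `0 < h ≤ h₀`
    (h₀ : ℝ) (hh₀ : 0 < h₀)
    (we₁ wo₁ we₂ wo₂ we₃ wo₃ we₄ wo₄ : ℝ → ℂ → ℂ)
    (hw₁ : ∀ h ∈ Ioc (0:ℝ) h₀, IsWKBSum Ω h 1 sq H x₁ (we₁ h) (wo₁ h))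
    (hw₂ : ∀ h ∈ Ioc (0:ℝ) h₀, IsWKBSum Ω h 1 sq H x₂ (we₂ h) (wo₂ h))
    (hw₃ : ∀ h ∈ Ioc (0:ℝ) h₀, IsWKBSum Ω h (-1) sq H x₃ (we₃ h) (wo₃ h))
    (hw₄ : ∀ h ∈ Ioc (0:ℝ) h₀, IsWKBSum Ω h (-1) sq H x₄ (we₄ h) (wo₄ h))
    -- the connection coefficients: `u₁ = c₂ u₂ + c₃ u₃` and `u₄ = c̃₂ ũ₂ + c̃₃ ũ₃`
    (c₂ c₃ ct₂ ct₃ : ℝ → ℂ)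
    (hcomb₁ : ∀ h ∈ Ioc (0:ℝ) h₀, ∀ x ∈ Ω,
      wkbPlus h Zα H (we₁ h) (wo₁ h) x
        = c₂ h • wkbPlus h Zα H (we₂ h) (wo₂ h) x
          + c₃ h • wkbMinus h Zα H (we₃ h) (wo₃ h) x)
    (hcomb₄ : ∀ h ∈ Ioc (0:ℝ) h₀, ∀ x ∈ Ω,
      wkbMinus h Zβ H (we₄ h) (wo₄ h) x
        = ct₂ h • wkbPlus h Zβ H (we₂ h) (wo₂ h) x
          + ct₃ h • wkbMinus h Zβ H (we₃ h) (wo₃ h) x) :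
    ∃ C : ℝ, 0 < C ∧ ∃ h₁ ∈ Ioc (0:ℝ) h₀,
      ∀ h ∈ Ioc (0:ℝ) h₁, ‖c₂ h * ct₃ h - 1‖ ≤ C * h := by
  have hsq0 : ∀ x ∈ Ω, sq x ≠ 0 := fun x hx h0 => hnv x hx (by rw [← hsq x hx, h0]; ring)
  have hsqc : ContinuousOn sq Ω := continuousOn_of_forall_hasDerivAt hΩopen hZα
  have hh₀' : h₀ ∈ Ioc 0 h₀ := ⟨hh₀, le_rfl⟩
  have hφ := (hw₁ h₀ hh₀').eventually_continuousAt_coeff hΩopen hΩconn hsqc hx₁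
  have hφ₁ := (hw₁ h₀ hh₀').continuousAt_coeff hΩopen hsqc hx₁
  have hφ₂ := (hw₂ h₀ hh₀').continuousAt_coeff hΩopen hsqc hx₂
  have hφ₃ := (hw₃ h₀ hh₀').continuousAt_coeff hΩopen hsqc hx₃
  have hφ₄ := (hw₄ h₀ hh₀').continuousAt_coeff hΩopen hsqc hx₄
  have h13 := hp13.isBigO_wkbSum hΩopen hZα hsq0 hφ hφ₁ hφ₃ hh₀ hw₁
  have h23 := hp23.isBigO_wkbSum hΩopen hZα hsq0 hφ hφ₂ hφ₃ hh₀ hw₂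
  have h24 := hp24.isBigO_wkbSum hΩopen hZα hsq0 hφ hφ₂ hφ₄ hh₀ hw₂
  -- evaluating the connection formulas at `x₃` and `x₂`, and two pairings
  have hkey : ∀ h ∈ Ioc (0:ℝ) h₀,
      (c₂ h * ct₃ h - 1) * we₂ h x₃ ^ 2 = we₁ h x₃ * we₂ h x₄ - we₂ h x₃ ^ 2 := by
    intro h hh
    have h₁ := eq_mul_of_wkbPlus_eq (hH x₃ hx₃).1 (hw₃ h hh).2.1 (hcomb₁ h hh x₃ hx₃)
    have h₄ := eq_mul_of_wkbMinus_eq (hH x₂ hx₂).1 (hw₂ h hh).2.1 (hcomb₄ h hh x₂ hx₂)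
    have h₂₃ := (hw₂ h hh).apply_eq_apply hΩopen hΩconn (hw₃ h hh) hx₂ hx₃
    have h₂₄ := (hw₂ h hh).apply_eq_apply hΩopen hΩconn (hw₄ h hh) hx₂ hx₄
    rw [h₁, h₂₄, h₄, ← h₂₃]
    ring
  exact exists_bound_of_isBigO_nhdsGT (isBigO_sub_one_of_mul_sq_eq
    (tendsto_nhdsWithin_of_tendsto_nhds tendsto_id) h13 h23 h24
    (eventually_of_mem (Ioc_mem_nhdsGT hh₀) hkey)) hh₀

/-- **Lemma 3.1, first part:** `c₂ c̃₃ = 1 + O(h)` as `h → 0` (in both cases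
`A(α) = A(β)` and `A(α) = -A(β)`). -/
theorem connection_coeff_c2_ct3
    (A : ℂ → ℂ) (δ lam0 α0 β0 : ℝ) (hA1 : ZSA1 A δ lam0 α0 β0)
    (lam : ℝ) (hnear : |lam - lam0| < lam0)
    (α β : ℝ) (hαβ : α < β)
    (hα : A (α : ℂ) ^ 2 = ((lam : ℂ)) ^ 2) (hβ : A (β : ℂ) ^ 2 = ((lam : ℂ)) ^ 2)
    -- the cut plane `Ω` (a neighborhood of the Stokes region minus the two branch cuts)
    (Ω : Set ℂ) (hΩopen : IsOpen Ω) (hΩconn : IsPreconnected Ω)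
    (hΩδ : Ω ⊆ {z : ℂ | |z.im| < δ})
    (hnv : ∀ x ∈ Ω, A x ^ 2 - (lam : ℂ) ^ 2 ≠ 0)
    -- the branches
    (sq H : ℂ → ℂ)
    (hsq : ∀ x ∈ Ω, sq x ^ 2 = A x ^ 2 - (lam : ℂ) ^ 2)
    (hH : ∀ x ∈ Ω, H x ≠ 0 ∧ (H x) ^ 4 = (A x + lam) / (A x - lam))
    -- phases based at the turning points `α` and `β`
    (Zα Zβ : ℂ → ℂ)
    (hZα : ∀ x ∈ Ω, HasDerivAt Zα (sq x) x)
    (hZβ : ∀ x ∈ Ω, HasDerivAt Zβ (sq x) x)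
    -- the base points, one in each sector
    (x₁ x₂ x₃ x₄ : ℂ) (hx₁ : x₁ ∈ Ω) (hx₂ : x₂ ∈ Ω) (hx₃ : x₃ ∈ Ω) (hx₄ : x₄ ∈ Ω)
    -- sector structure: monotone paths `Γ(x₁,x₃)`, `Γ(x₂,x₃)`, `Γ(x₂,x₄)`
    (hp13 : MonoPath Ω (fun z => (Zα z).re) x₁ x₃)
    (hp23 : MonoPath Ω (fun z => (Zα z).re) x₂ x₃)
    (hp24 : MonoPath Ω (fun z => (Zα z).re) x₂ x₄)
    -- WKB series of `u₁, u₂ (and ũ₂), u₃ (and ũ₃), u₄`, for each `0 < h ≤ h₀`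
    (h₀ : ℝ) (hh₀ : 0 < h₀)
    (we₁ wo₁ we₂ wo₂ we₃ wo₃ we₄ wo₄ : ℝ → ℂ → ℂ)
    (hw₁ : ∀ h ∈ Ioc (0:ℝ) h₀, IsWKBSum Ω h 1 sq H x₁ (we₁ h) (wo₁ h))
    (hw₂ : ∀ h ∈ Ioc (0:ℝ) h₀, IsWKBSum Ω h 1 sq H x₂ (we₂ h) (wo₂ h))
    (hw₃ : ∀ h ∈ Ioc (0:ℝ) h₀, IsWKBSum Ω h (-1) sq H x₃ (we₃ h) (wo₃ h))
    (hw₄ : ∀ h ∈ Ioc (0:ℝ) h₀, IsWKBSum Ω h (-1) sq H x₄ (we₄ h) (wo₄ h))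
    -- the connection coefficients: `u₁ = c₂ u₂ + c₃ u₃` and `u₄ = c̃₂ ũ₂ + c̃₃ ũ₃`
    (c₂ c₃ ct₂ ct₃ : ℝ → ℂ)
    (hcomb₁ : ∀ h ∈ Ioc (0:ℝ) h₀, ∀ x ∈ Ω,
      wkbPlus h Zα H (we₁ h) (wo₁ h) x
        = c₂ h • wkbPlus h Zα H (we₂ h) (wo₂ h) x
          + c₃ h • wkbMinus h Zα H (we₃ h) (wo₃ h) x)
    (hcomb₄ : ∀ h ∈ Ioc (0:ℝ) h₀, ∀ x ∈ Ω,
      wkbMinus h Zβ H (we₄ h) (wo₄ h) x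
        = ct₂ h • wkbPlus h Zβ H (we₂ h) (wo₂ h) x
          + ct₃ h • wkbMinus h Zβ H (we₃ h) (wo₃ h) x) :
    ∃ C : ℝ, 0 < C ∧ ∃ h₁ ∈ Ioc (0:ℝ) h₀,
      ∀ h ∈ Ioc (0:ℝ) h₁, ‖c₂ h * ct₃ h - 1‖ ≤ C * h :=
  connection_coeff_c2_ct3_general A lam Ω hΩopen hΩconn hnv sq H hsq hH Zα Zβ hZα x₁ x₂ x₃ x₄ hx₁
    hx₂ hx₃ hx₄ hp13 hp23 hp24 h₀ hh₀ we₁ wo₁ we₂ wo₂ we₃ wo₃ we₄ wo₄ hw₁ hw₂ hw₃ hw₄ c₂ c₃ ct₂ ct₃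
    hcomb₁ hcomb₄
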